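/- For every m ≥ 1 and all symbols a, b ∈ {0,1,...,7}, the number of words in the OP-LOCO code OPC(m) whose most significant symbol c_{m−1} equals a is the same as the number of words in OPC(m) whose most significant symbol equals b; in particular, each such count equals |OPC(m)|/8. -/

import Mathlib

/-!
The top symbol `c_{m-1}` can only occur as the `u` of a forbidden pattern `u y v`, and there only
its class, `{0, 1, 4, 5}` or `{2, 3, 6, 7}`, matters: changing the top symbol within its class maps
codewords to codewords. The complement `x ↦ 7 - x` (`Fin.rev`) preserves the code, since it
exchanges the two classes as well as the middle symbols `2` and `5`. Hence all eight fibres of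
the top symbol have the same size, and together they partition the code.
-/

/-- The OP-LOCO code: words of length `m` over the alphabet `{0,...,7}`
(position `m-1` most significant) containing no contiguous subword `u 2 v` with
`u, v ∈ {0,1,4,5}` and no contiguous subword `u 5 v` with `u, v ∈ {2,3,6,7}`. -/
def OPC (m : ℕ) : Set (Fin m → Fin 8) :=
  {c | ∀ i : ℕ, ∀ h : i + 2 < m,
      ¬((c ⟨i + 2, h⟩ ∈ ({0, 1, 4, 5} : Set (Fin 8)) ∧ c ⟨i + 1, by omega⟩ = 2 ∧
            c ⟨i, by omega⟩ ∈ ({0, 1, 4, 5} : Set (Fin 8))) ∨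
        (c ⟨i + 2, h⟩ ∈ ({2, 3, 6, 7} : Set (Fin 8)) ∧ c ⟨i + 1, by omega⟩ = 5 ∧
            c ⟨i, by omega⟩ ∈ ({2, 3, 6, 7} : Set (Fin 8))))}

theorem Set.ncard_sep_eq_of_involutive {β : Type*} {S : Set β} {p q : β → Prop} {φ : β → β}
    (hφ : Function.Involutive φ) (hS : ∀ x ∈ S, φ x ∈ S) (hpq : ∀ x, q (φ x) ↔ p x) :
    {x ∈ S | p x}.ncard = {x ∈ S | q x}.ncard := by
  rw [← Set.ncard_image_of_injective _ hφ.injective]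
  congr 1
  ext y
  refine ⟨?_, fun ⟨hy, hqy⟩ => ⟨φ y, ⟨hS y hy, ?_⟩, hφ y⟩⟩
  · rintro ⟨x, ⟨hx, hpx⟩, rfl⟩
    exact ⟨hS x hx, (hpq x).2 hpx⟩
  · rwa [← hpq, hφ]

theorem Set.ncard_eq_card_mul_ncard_fiber {β γ : Type*} [Finite β] [Fintype γ] {S : Set β}
    (f : β → γ) (x₀ : γ) (h : ∀ x, {b ∈ S | f b = x}.ncard = {b ∈ S | f b = x₀}.ncard) :
    S.ncard = Fintype.card γ * {b ∈ S | f b = x₀}.ncard := by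
  classical
  have := Fintype.ofFinite β
  rw [Set.ncard_eq_toFinset_card', Finset.card_eq_sum_card_fiberwise
    (fun b _ => Finset.mem_univ (f b)),
    ← Finset.card_univ, ← smul_eq_mul, ← Finset.sum_const]
  refine Finset.sum_congr rfl fun x _ => ?_
  rw [← h x, Set.ncard_eq_toFinset_card']
  congr 1
  ext b
  simp

def lowSymbols : Finset (Fin 8) := {0, 1, 4, 5}

def IsForbiddenTriple (x y z : Fin 8) : Prop :=
  (x ∈ lowSymbols ∧ y = 2 ∧ z ∈ lowSymbols) ∨ (x ∉ lowSymbols ∧ y = 5 ∧ z ∉ lowSymbols)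

instance (x y z : Fin 8) : Decidable (IsForbiddenTriple x y z) := by
  unfold IsForbiddenTriple; infer_instance

theorem isForbiddenTriple_iff (x y z : Fin 8) : IsForbiddenTriple x y z ↔
    (x ∈ ({0, 1, 4, 5} : Set (Fin 8)) ∧ y = 2 ∧ z ∈ ({0, 1, 4, 5} : Set (Fin 8))) ∨
      (x ∈ ({2, 3, 6, 7} : Set (Fin 8)) ∧ y = 5 ∧ z ∈ ({2, 3, 6, 7} : Set (Fin 8))) := by
  simp only [Set.mem_insert_iff, Set.mem_singleton_iff]
  revert x y z
  decide

theorem isForbiddenTriple_congr_left {x x' : Fin 8} (h : x ∈ lowSymbols ↔ x' ∈ lowSymbols)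
    (y z : Fin 8) : IsForbiddenTriple x y z ↔ IsForbiddenTriple x' y z := by
  simp only [IsForbiddenTriple, h]

theorem isForbiddenTriple_rev (x y z : Fin 8) :
    IsForbiddenTriple x.rev y.rev z.rev ↔ IsForbiddenTriple x y z := by
  revert x y z; decide

theorem rev_mem_lowSymbols (x : Fin 8) : x.rev ∈ lowSymbols ↔ x ∉ lowSymbols := by
  revert x; decide

theorem mem_OPC_iff {m : ℕ} (c : Fin m → Fin 8) : c ∈ OPC m ↔
    ∀ i (h : i + 2 < m),
      ¬IsForbiddenTriple (c ⟨i + 2, h⟩) (c ⟨i + 1, by omega⟩) (c ⟨i, by omega⟩) := by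
  simp only [isForbiddenTriple_iff]
  rfl

theorem rev_comp_mem_OPC {m : ℕ} {c : Fin m → Fin 8} (hc : c ∈ OPC m) : Fin.rev ∘ c ∈ OPC m := by
  rw [mem_OPC_iff] at hc ⊢
  intro i h
  simpa only [Function.comp_apply, isForbiddenTriple_rev] using hc i h

theorem update_top_mem_OPC {m : ℕ} {c : Fin m → Fin 8} (hc : c ∈ OPC m) {t : Fin m}
    (ht : t.val = m - 1) {x : Fin 8} (hx : x ∈ lowSymbols ↔ c t ∈ lowSymbols) :
    Function.update c t x ∈ OPC m := by
  rw [mem_OPC_iff] at hc ⊢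
  intro i h
  have h₁ : (⟨i + 1, by omega⟩ : Fin m) ≠ t := Fin.ne_of_val_ne (show i + 1 ≠ t by omega)
  have h₀ : (⟨i, by omega⟩ : Fin m) ≠ t := Fin.ne_of_val_ne (show i ≠ t by omega)
  rw [Function.update_of_ne h₁, Function.update_of_ne h₀]
  by_cases hit : (⟨i + 2, h⟩ : Fin m) = t
  · rw [hit, Function.update_self, isForbiddenTriple_congr_left hx, ← hit]
    exact hc i h
  · rw [Function.update_of_ne hit]
    exact hc i h

theorem Equiv.swap_apply_congr {α : Type*} [DecidableEq α] {p : α → Prop} {a b : α}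
    (hab : p a ↔ p b) (x : α) : p (Equiv.swap a b x) ↔ p x := by
  rcases eq_or_ne x a with rfl | hxa
  · rw [Equiv.swap_apply_left, hab]
  rcases eq_or_ne x b with rfl | hxb
  · rw [Equiv.swap_apply_right, hab]
  · rw [Equiv.swap_apply_of_ne_of_ne hxa hxb]

theorem ncard_fiber_eq_ncard_fiber_rev {m : ℕ} (t : Fin m) (a : Fin 8) :
    {c ∈ OPC m | c t = a}.ncard = {c ∈ OPC m | c t = a.rev}.ncard :=
  Set.ncard_sep_eq_of_involutive (φ := (Fin.rev ∘ ·)) (fun _ => funext fun _ => Fin.rev_rev _)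
    (fun _ => rev_comp_mem_OPC) (fun _ => Fin.rev_inj)

theorem ncard_fiber_top_eq_of_mem_lowSymbols_iff {m : ℕ} {t : Fin m} (ht : t.val = m - 1)
    {a b : Fin 8} (hab : a ∈ lowSymbols ↔ b ∈ lowSymbols) :
    {c ∈ OPC m | c t = a}.ncard = {c ∈ OPC m | c t = b}.ncard := by
  refine Set.ncard_sep_eq_of_involutive
    (φ := fun c => Function.update c t (Equiv.swap a b (c t))) (fun c => ?_)
    (fun c hc => update_top_mem_OPC hc ht (Equiv.swap_apply_congr (p := (· ∈ lowSymbols)) hab _))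
    (fun c => ?_)
  · simp only [Function.update_self, Equiv.swap_apply_self, Function.update_idem,
      Function.update_eq_self]
  · simp only [Function.update_self, Equiv.swap_apply_eq_iff, Equiv.swap_apply_right]

theorem ncard_fiber_top_eq {m : ℕ} {t : Fin m} (ht : t.val = m - 1) (a b : Fin 8) :
    {c ∈ OPC m | c t = a}.ncard = {c ∈ OPC m | c t = b}.ncard := by
  by_cases hab : a ∈ lowSymbols ↔ b ∈ lowSymbols
  · exact ncard_fiber_top_eq_of_mem_lowSymbols_iff ht hab
  · rw [ncard_fiber_eq_ncard_fiber_rev t a]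
    exact ncard_fiber_top_eq_of_mem_lowSymbols_iff ht
      ((rev_mem_lowSymbols a).trans (not_iff.mp hab))

theorem stmt10 (m : ℕ) (hm : 1 ≤ m) (a b : Fin 8) :
    {c ∈ OPC m | c ⟨m - 1, by omega⟩ = a}.ncard =
      {c ∈ OPC m | c ⟨m - 1, by omega⟩ = b}.ncard ∧
    8 * {c ∈ OPC m | c ⟨m - 1, by omega⟩ = a}.ncard = (OPC m).ncard := by
  have hfiber := ncard_fiber_top_eq (t := ⟨m - 1, by omega⟩) rfl
  refine ⟨hfiber a b, ?_⟩
  rw [Set.ncard_eq_card_mul_ncard_fiber (S := OPC m) (fun c => c ⟨m - 1, by omega⟩) a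
    (hfiber · a), Fintype.card_fin]
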